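/- arXiv:2007.05692 — 5 statements merged into one kernel-verified Lean document; each statement's English description precedes it below -/
import Mathlib

section
/- For probability densities p and q on a measure space with p, q > 0 a.e., the function D(x) = q(x)/(p(x)+q(x)) maximizes the functional U(D) = ∫ p(x)·log(1 − D(x)) + q(x)·log D(x) dx over measurable functions D with values in (0,1). -/
open MeasureTheory Real

/-! The integrand is maximized pointwise: for `a, b > 0` the function
`t ↦ a log (1 - t) + b log t` on `(0, 1)` peaks at `t = b / (a + b)`. This is Gibbs' inequality for
the two-point distributions `(1 - t, t)` and `(a, b) / (a + b)`, obtained from `log x ≤ x - 1`;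
integrating the pointwise bound gives the claim. -/

lemma mul_log_sub_mul_log_le {a u v : ℝ} (ha : 0 ≤ a) (hu : 0 < u) (hv : 0 < v) :
    a * log u - a * log v ≤ a * (u / v - 1) := by
  rw [← mul_sub, ← log_div hu.ne' hv.ne']
  exact mul_le_mul_of_nonneg_left (log_le_sub_one_of_pos (div_pos hu hv)) ha

lemma mul_log_one_sub_add_mul_log_le {a b t : ℝ} (ha : 0 < a) (hb : 0 < b)
    (ht : t ∈ Set.Ioo 0 1) :
    a * log (1 - t) + b * log t ≤ a * log (1 - b / (a + b)) + b * log (b / (a + b)) := by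
  obtain ⟨ht0, ht1⟩ := ht
  have hab : 0 < a + b := ha.trans (lt_add_of_pos_right a hb)
  have hcompl : 1 - b / (a + b) = a / (a + b) := by field_simp; ring
  rw [hcompl]
  have hA := mul_log_sub_mul_log_le ha.le (sub_pos.2 ht1) (div_pos ha hab)
  have hB := mul_log_sub_mul_log_le hb.le ht0 (div_pos hb hab)
  have hsum : a * ((1 - t) / (a / (a + b)) - 1) + b * (t / (b / (a + b)) - 1) = 0 := by
    field_simp
    ring
  linarith

theorem optimal_discriminator_general
    {X : Type*} [MeasurableSpace X] (μ : Measure X)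
    (p q : X → ℝ)
    (hp0 : ∀ᵐ x ∂μ, 0 < p x) (hq0 : ∀ᵐ x ∂μ, 0 < q x)
    (hIstar : Integrable (fun x =>
        p x * Real.log (1 - q x / (p x + q x)) + q x * Real.log (q x / (p x + q x))) μ)
    (D : X → ℝ) (hD01 : ∀ x, D x ∈ Set.Ioo (0 : ℝ) 1)
    (hID : Integrable (fun x => p x * Real.log (1 - D x) + q x * Real.log (D x)) μ) :
    ∫ x, (p x * Real.log (1 - D x) + q x * Real.log (D x)) ∂μ ≤
      ∫ x, (p x * Real.log (1 - q x / (p x + q x)) +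
            q x * Real.log (q x / (p x + q x))) ∂μ := by
  refine integral_mono_ae hID hIstar ?_
  filter_upwards [hp0, hq0] with x hp hq
  exact mul_log_one_sub_add_mul_log_le hp hq (hD01 x)

/-- The optimal GAN discriminator: for probability densities `p`, `q` (positive a.e.),
`D*(x) = q x / (p x + q x)` maximizes `U(D) = ∫ p·log(1−D) + q·log D dμ`
over measurable functions `D` with values in `(0,1)`. -/
theorem optimal_discriminator
    {X : Type*} [MeasurableSpace X] (μ : Measure X)
    (p q : X → ℝ) (hpm : Measurable p) (hqm : Measurable q)
    (hp0 : ∀ᵐ x ∂μ, 0 < p x) (hq0 : ∀ᵐ x ∂μ, 0 < q x)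
    (hp1 : ∫ x, p x ∂μ = 1) (hq1 : ∫ x, q x ∂μ = 1)
    (hIstar : Integrable (fun x =>
        p x * Real.log (1 - q x / (p x + q x)) + q x * Real.log (q x / (p x + q x))) μ)
    (D : X → ℝ) (hD : Measurable D) (hD01 : ∀ x, D x ∈ Set.Ioo (0 : ℝ) 1)
    (hID : Integrable (fun x => p x * Real.log (1 - D x) + q x * Real.log (D x)) μ) :
    ∫ x, (p x * Real.log (1 - D x) + q x * Real.log (D x)) ∂μ ≤
      ∫ x, (p x * Real.log (1 - q x / (p x + q x)) +
            q x * Real.log (q x / (p x + q x))) ∂μ :=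
  optimal_discriminator_general μ p q hp0 hq0 hIstar D hD01 hID
end

section
/- Let L, U : 𝒟 → ℝ with the property that for every D ∈ 𝒟 there exists D* ∈ 𝒟 with L(D*) = L(D) and U(D*) ≥ U(D') for all D' ∈ 𝒟. Then sup_D (L(D) + U(D)) = sup_D L(D) + sup_D U(D), and if D_L maximizes L, there exists D* maximizing L + U with L(D*) = L(D_L). -/
/-!
The interchange property, applied at any point, produces a maximizer `Dₘ` of `U`; applied at an
arbitrary `D`, it produces `D*` with `L D* + U D* = L D + U Dₘ`. Hence `L + U` and `L + U Dₘ` have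
the same supremum, namely `sup L + sup U`, and applied at a maximizer of `L` it yields a maximizer
of `L + U` with the same value of `L`.
-/

open Set

theorem ciSup_eq_ciSup_of_le_of_forall_exists_ge {ι α : Type*} [ConditionallyCompleteLattice α]
    {f g : ι → α} (hg : BddAbove (range g)) (hfg : ∀ i, f i ≤ g i) (hgf : ∀ i, ∃ j, g i ≤ f j) :
    ⨆ i, f i = ⨆ i, g i := by
  cases isEmpty_or_nonempty ι
  · simp only [iSup_of_empty']
  refine le_antisymm (ciSup_mono hg hfg) (ciSup_le fun i => ?_)
  obtain ⟨j, hj⟩ := hgf i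
  exact hj.trans (le_ciSup (hg.range_mono g hfg) j)

def HasInterchange {𝒟 : Type*} (L U : 𝒟 → ℝ) : Prop :=
  ∀ D, ∃ Dstar, L Dstar = L D ∧ ∀ D', U D' ≤ U Dstar

namespace HasInterchange

variable {𝒟 : Type*} {L U : 𝒟 → ℝ}

theorem iSup_add (h : HasInterchange L U) (hL : BddAbove (range L)) :
    ⨆ D, (L D + U D) = (⨆ D, L D) + ⨆ D, U D := by
  cases isEmpty_or_nonempty 𝒟
  · simp only [Real.iSup_of_isEmpty, add_zero]
  obtain ⟨Dₘ, -, hDₘ⟩ := h (Classical.arbitrary 𝒟)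
  have hsupU : ⨆ D, U D = U Dₘ :=
    ciSup_eq_of_forall_le_of_forall_lt_exists_gt hDₘ fun _ hw => ⟨Dₘ, hw⟩
  rw [hsupU, ciSup_add hL]
  refine ciSup_eq_ciSup_of_le_of_forall_exists_ge
    (hL.range_add (bddAbove_singleton.mono range_const_subset)) (fun D => add_le_add_right (hDₘ D) _) fun D => ?_
  obtain ⟨D₁, hL₁, hU₁⟩ := h D
  exact ⟨D₁, hL₁ ▸ add_le_add_right (hU₁ Dₘ) _⟩

theorem exists_isMax_add (h : HasInterchange L U) {DL : 𝒟} (hDL : ∀ D, L D ≤ L DL) :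
    ∃ Dstar, (∀ D, L D + U D ≤ L Dstar + U Dstar) ∧ L Dstar = L DL :=
  let ⟨Dstar, hL, hU⟩ := h DL
  ⟨Dstar, fun D => add_le_add (hL ▸ hDL D) (hU D), hL⟩

end HasInterchange

theorem sup_sum_decouples_general
    {𝒟 : Type*} (L U : 𝒟 → ℝ)
    (hLbdd : BddAbove (Set.range L))
    (hinter : ∀ D : 𝒟, ∃ Dstar : 𝒟, L Dstar = L D ∧ ∀ D' : 𝒟, U D' ≤ U Dstar) :
    (⨆ D : 𝒟, (L D + U D)) = (⨆ D : 𝒟, L D) + ⨆ D : 𝒟, U D ∧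
    ∀ DL : 𝒟, (∀ D : 𝒟, L D ≤ L DL) →
      ∃ Dstar : 𝒟, (∀ D : 𝒟, L D + U D ≤ L Dstar + U Dstar) ∧ L Dstar = L DL :=
  ⟨HasInterchange.iSup_add hinter hLbdd, fun _ => HasInterchange.exists_isMax_add hinter⟩

/-- Proposition 1 (1), abstractly: under the interchange property, the
supremum of `L + U` decouples as `sup L + sup U`, and any maximizer of `L`
lifts to a maximizer of `L + U` with the same supervised value. -/
theorem sup_sum_decouples
    {𝒟 : Type*} [Nonempty 𝒟] (L U : 𝒟 → ℝ)
    (hLbdd : BddAbove (Set.range L)) (hUbdd : BddAbove (Set.range U))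
    (hJbdd : BddAbove (Set.range fun D => L D + U D))
    (hinter : ∀ D : 𝒟, ∃ Dstar : 𝒟, L Dstar = L D ∧ ∀ D' : 𝒟, U D' ≤ U Dstar) :
    (⨆ D : 𝒟, (L D + U D)) = (⨆ D : 𝒟, L D) + ⨆ D : 𝒟, U D ∧
    ∀ DL : 𝒟, (∀ D : 𝒟, L D ≤ L DL) →
      ∃ Dstar : 𝒟, (∀ D : 𝒟, L D + U D ≤ L Dstar + U Dstar) ∧ L Dstar = L DL :=
  sup_sum_decouples_general L U hLbdd hinter
end

section
/- Let Ω = ⋃_{k=1}^K Ω^k be a partition of the data manifold into classes, f : X → ℝ^d a feature map, and ω_1,…,ω_K ∈ ℝ^d. Assume: (1) for every labeled point (x,y), ω_y^T f(x) > ω_k^T f(x) for all k ≠ y; (2) for every x ∈ Ω, max_{k≤K} ω_k^T f(x) > 0, and for every generated point x_g outside the closure of Ω, max_{k≤K} ω_k^T f(x_g) < 0; (3) for every x_k ∈ Ω^k and every j ≠ k there exist a labeled point x_j of class j, a generated point x_g outside Ω̄, and α ∈ (0,1) with f(x_g) = α·f(x_k) + (1−α)·f(x_j). Then for every class k and every x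 ∈ Ω^k, ω_k^T f(x) > ω_j^T f(x) for all j ≠ k. -/
/-!
If a point `x` of class `k` had a nonnegative `j`-logit for some `j ≠ k`, the fake point whose
feature lies strictly between `f x` and the feature of a labeled point of class `j` would have a
positive `j`-logit, since that labeled point has the largest and hence a positive `j`-logit.
So all logits of `x` other than the `k`-th are negative, and the positive maximal logit is the
`k`-th one.
-/

open Set

lemma pos_of_exists_pos_of_forall_ne_lt {ι : Type*} {s : ι → ℝ} {j : ι}
    (hpos : ∃ i, 0 < s i) (hlt : ∀ i, i ≠ j → s i < s j) : 0 < s j := by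
  obtain ⟨i, hi⟩ := hpos
  rcases eq_or_ne i j with rfl | hij
  · exact hi
  · exact hi.trans (hlt i hij)

lemma pos_of_exists_pos_of_forall_ne_neg {ι : Type*} {s : ι → ℝ} {k : ι}
    (hpos : ∃ i, 0 < s i) (hneg : ∀ j, j ≠ k → s j < 0) : 0 < s k := by
  obtain ⟨i, hi⟩ := hpos
  rcases eq_or_ne i k with rfl | hik
  · exact hi
  · exact absurd hi (hneg i hik).not_gt

lemma real_inner_neg_of_inner_convexComb_neg {E : Type*} [NormedAddCommGroup E]
    [InnerProductSpace ℝ E] {w u v : E} {α : ℝ} (hα : α ∈ Ioo 0 1) (hv : 0 < inner ℝ w v)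
    (h : inner ℝ w (α • u + (1 - α) • v) < 0) : inner ℝ w u < 0 := by
  rw [inner_add_right, real_inner_smul_right, real_inner_smul_right] at h
  obtain ⟨hα₀, hα₁⟩ := hα
  nlinarith

/-- Proposition 3: under correctness on labeled data, true/fake separation by
the max-logit sign, and traversal of each class by convex combinations of
features through fake points, the discriminator classifies every point of the
data manifold correctly. -/
theorem optimal_discriminator_on_unlabeled
    {X : Type*} {K d : ℕ}
    (Ω : Fin K → Set X)            -- class-k part of the data manifold
    (labeled : Set (X × Fin K))    -- labeled data with their labels
    (Gout : Set X)                 -- generated points outside the closure of Ω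
    (f : X → EuclideanSpace ℝ (Fin d)) (ω : Fin K → EuclideanSpace ℝ (Fin d))
    (hlab_mem : ∀ xy ∈ labeled, xy.1 ∈ Ω xy.2)
    -- Assumption 1 (1): correct decisions on labeled data
    (h1 : ∀ xy ∈ labeled, ∀ k : Fin K, k ≠ xy.2 →
      (inner ℝ (ω k) (f xy.1) : ℝ) < inner ℝ (ω xy.2) (f xy.1))
    -- Assumption 1 (2): positive max-logit on the data manifold ...
    (h2a : ∀ x, x ∈ ⋃ k, Ω k → ∃ k : Fin K, (0 : ℝ) < inner ℝ (ω k) (f x))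
    -- ... and negative max-logit on fake points
    (h2b : ∀ xg ∈ Gout, ∀ k : Fin K, (inner ℝ (ω k) (f xg) : ℝ) < 0)
    -- Assumptions 1 (3)+(4): for each point of class k and each other class j,
    -- a fake point whose feature is a convex combination of the features of
    -- the point and of a labeled point of class j
    (h34 : ∀ k : Fin K, ∀ xk ∈ Ω k, ∀ j : Fin K, j ≠ k →
      ∃ xj : X, (xj, j) ∈ labeled ∧
        ∃ xg ∈ Gout, ∃ α ∈ Set.Ioo (0 : ℝ) 1,
          f xg = α • f xk + (1 - α) • f xj) :
    ∀ k : Fin K, ∀ x ∈ Ω k, ∀ j : Fin K, j ≠ k →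
      (inner ℝ (ω j) (f x) : ℝ) < inner ℝ (ω k) (f x) := by
  intro k x hx
  have other_logits_neg : ∀ j, j ≠ k → inner ℝ (ω j) (f x) < 0 := by
    intro j hj
    obtain ⟨xj, hxj, xg, hxg, α, hα, hfg⟩ := h34 k x hx j hj
    have hxj_pos : 0 < inner ℝ (ω j) (f xj) :=
      pos_of_exists_pos_of_forall_ne_lt (s := fun i => inner ℝ (ω i) (f xj))
        (h2a xj (mem_iUnion.2 ⟨j, hlab_mem _ hxj⟩)) (h1 _ hxj)
    exact real_inner_neg_of_inner_convexComb_neg hα hxj_pos (hfg ▸ h2b xg hxg j)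
  have hk_pos : 0 < inner ℝ (ω k) (f x) :=
    pos_of_exists_pos_of_forall_ne_neg (s := fun i => inner ℝ (ω i) (f x))
      (h2a x (mem_iUnion.2 ⟨k, hx⟩)) other_logits_neg
  exact fun j hj => (other_logits_neg j hj).trans hk_pos
end

section
/- Let p, q be probability densities with q > 0 a.e. Then the functional V(D) = ∫ p·log D + q·log(1−D) dμ over measurable D : X → (0,1) satisfies sup_D V(D) = 2·JS(p‖q) − 2·log 2 = KL(p ‖ (p+q)/2) + KL(q ‖ (p+q)/2) − 2·log 2. -/
/-!
Pointwise, `t ↦ a log t + b log (1 - t)` is maximised on `(0, 1)` at `t = a / (a + b)`, as the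
tangent-line bound `log x ≤ x - 1` shows; integrating bounds every value `V(D)` by the integral
of `p log (p / (p + q)) + q log (q / (p + q))`, which is `2 JS(p‖q) - 2 log 2`.
The maximiser `p / (p + q)` vanishes where `p` does, so it is not an admissible discriminator.
Its shrinkage `s p / (p + q) + (1 - s) / 2` towards `1/2` is, and since it multiplies neither `D`
nor `1 - D` by less than `s`, its value is at least the bound plus `2 log s`; let `s → 1`.
-/

open MeasureTheory Real

lemma mul_log_le_mul_log_div_add {a c t : ℝ} (ha : 0 ≤ a) (hc : 0 < c) (ht : 0 < t) :
    a * log t ≤ a * log (a / c) + c * t - a := by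
  rcases ha.eq_or_lt with rfl | ha
  · simpa using (mul_pos hc ht).le
  · have key := log_le_sub_one_of_pos (show 0 < c * t / a by positivity)
    rw [log_div (by positivity) ha.ne', log_mul hc.ne' ht.ne'] at key
    rw [log_div ha.ne' hc.ne']
    have := mul_le_mul_of_nonneg_left key ha.le
    rw [mul_sub, mul_sub, mul_one, mul_div_cancel₀ _ ha.ne'] at this
    linarith

lemma mul_log_add_mul_log_one_sub_le {a b t : ℝ} (ha : 0 ≤ a) (hb : 0 ≤ b) (hab : 0 < a + b)
    (ht : t ∈ Set.Ioo (0 : ℝ) 1) :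
    a * log t + b * log (1 - t) ≤ a * log (a / (a + b)) + b * log (b / (a + b)) := by
  have h₁ := mul_log_le_mul_log_div_add ha hab ht.1
  have h₂ := mul_log_le_mul_log_div_add hb hab (sub_pos.2 ht.2)
  linarith

lemma mul_log_mul_add_le_mul_log {a c s w : ℝ} (ha : 0 ≤ a) (hc : 0 < c) (hs : 0 < s)
    (hw : 0 ≤ w) : a * (log s + log (a / c)) ≤ a * log (s * (a / c) + w) := by
  rcases ha.eq_or_lt with rfl | ha
  · simp
  · rw [← log_mul hs.ne' (by positivity)]
    exact mul_le_mul_of_nonneg_left (log_le_log (by positivity) (by linarith)) ha.le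

lemma mul_log_add_mul_log_le_of_mix {a b s : ℝ} (ha : 0 ≤ a) (hb : 0 ≤ b) (hab : 0 < a + b)
    (hs : s ∈ Set.Ioo (0 : ℝ) 1) :
    a * log (a / (a + b)) + b * log (b / (a + b)) + (a + b) * log s ≤
      a * log (s * (a / (a + b)) + (1 - s) / 2) +
        b * log (1 - (s * (a / (a + b)) + (1 - s) / 2)) := by
  have hw : 0 ≤ (1 - s) / 2 := by linarith [hs.2]
  have hsplit : 1 - (s * (a / (a + b)) + (1 - s) / 2) = s * (b / (a + b)) + (1 - s) / 2 := by
    field_simp; ring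
  have h₁ := mul_log_mul_add_le_mul_log ha hab hs.1 hw
  have h₂ := mul_log_mul_add_le_mul_log hb hab hs.1 hw
  rw [hsplit]
  linarith

lemma mul_log_div_half (a : ℝ) {c : ℝ} (hc : c ≠ 0) :
    a * log (a / (c / 2)) = a * log (a / c) + a * log 2 := by
  rcases eq_or_ne a 0 with rfl | ha
  · simp
  · rw [div_div_eq_mul_div, mul_div_right_comm, log_mul (div_ne_zero ha hc) two_ne_zero]
    ring

lemma div_add_mem_Icc {a b : ℝ} (ha : 0 ≤ a) (hb : 0 ≤ b) :
    a / (a + b) ∈ Set.Icc (0 : ℝ) 1 :=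
  ⟨by positivity, div_le_one_of_le₀ (by linarith) (by positivity)⟩

lemma mul_add_one_sub_div_two_mem_Ioo {r s : ℝ} (hr : r ∈ Set.Icc (0 : ℝ) 1)
    (hs : s ∈ Set.Ioo (0 : ℝ) 1) : s * r + (1 - s) / 2 ∈ Set.Ioo (0 : ℝ) 1 := by
  obtain ⟨hr₀, hr₁⟩ := hr
  obtain ⟨hs₀, hs₁⟩ := hs
  constructor <;> nlinarith

section
variable {X : Type*}

noncomputable def ganIntegrand (p q D : X → ℝ) (x : X) : ℝ :=
  p x * log (D x) + q x * log (1 - D x)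

noncomputable def ganOptimalIntegrand (p q : X → ℝ) (x : X) : ℝ :=
  p x * log (p x / (p x + q x)) + q x * log (q x / (p x + q x))

/-- The optimal discriminator `p / (p + q)` shrunk towards `1/2`; `max` keeps it in `(0, 1)` on
the null set where `q` fails to be positive. -/
noncomputable def mixedDiscriminator (p q : X → ℝ) (s : ℝ) (x : X) : ℝ :=
  s * (p x / (p x + max (q x) 0)) + (1 - s) / 2

lemma mixedDiscriminator_mem_Ioo {p : X → ℝ} (q : X → ℝ) {s : ℝ} (hp : ∀ x, 0 ≤ p x)
    (hs : s ∈ Set.Ioo (0 : ℝ) 1) (x : X) : mixedDiscriminator p q s x ∈ Set.Ioo (0 : ℝ) 1 :=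
  mul_add_one_sub_div_two_mem_Ioo (div_add_mem_Icc (hp x) (le_max_right _ _)) hs

variable [MeasurableSpace X] {μ : Measure X}

lemma measurable_mixedDiscriminator {p q : X → ℝ} (hp : Measurable p) (hq : Measurable q)
    (s : ℝ) : Measurable (mixedDiscriminator p q s) := by
  unfold mixedDiscriminator
  fun_prop

lemma ganIntegrand_ae_le {p q D : X → ℝ} (hp : ∀ x, 0 ≤ p x) (hq : ∀ᵐ x ∂μ, 0 < q x)
    (hD : ∀ x, D x ∈ Set.Ioo (0 : ℝ) 1) :
    ganIntegrand p q D ≤ᵐ[μ] ganOptimalIntegrand p q := by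
  filter_upwards [hq] with x hx
  exact mul_log_add_mul_log_one_sub_le (hp x) hx.le (by linarith [hp x]) (hD x)

lemma integrable_ganIntegrand_mixedDiscriminator_and_le {p q : X → ℝ} {s : ℝ}
    (hpm : Measurable p) (hqm : Measurable q) (hp0 : ∀ x, 0 ≤ p x) (hq0 : ∀ᵐ x ∂μ, 0 < q x)
    (hp : Integrable p μ) (hq : Integrable q μ) (hopt : Integrable (ganOptimalIntegrand p q) μ)
    (hs : s ∈ Set.Ioo (0 : ℝ) 1) :
    Integrable (ganIntegrand p q (mixedDiscriminator p q s)) μ ∧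
      ∫ x, ganOptimalIntegrand p q x ∂μ + (∫ x, p x ∂μ + ∫ x, q x ∂μ) * log s ≤
        ∫ x, ganIntegrand p q (mixedDiscriminator p q s) x ∂μ := by
  have hpq : Integrable (fun x => p x + q x) μ := hp.add hq
  have hlow_int : Integrable (fun x => ganOptimalIntegrand p q x + (p x + q x) * log s) μ :=
    hopt.add (hpq.mul_const _)
  have hlow : (fun x => ganOptimalIntegrand p q x + (p x + q x) * log s) ≤ᵐ[μ]
      ganIntegrand p q (mixedDiscriminator p q s) := by
    filter_upwards [hq0] with x hx
    simp only [ganIntegrand, mixedDiscriminator, max_eq_left hx.le]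
    exact mul_log_add_mul_log_le_of_mix (hp0 x) hx.le (by linarith [hp0 x]) hs
  have hint : Integrable (ganIntegrand p q (mixedDiscriminator p q s)) μ := by
    refine integrable_of_le_of_le ?_ hlow
      (ganIntegrand_ae_le hp0 hq0 (mixedDiscriminator_mem_Ioo q hp0 hs)) hlow_int hopt
    unfold ganIntegrand
    have hDm := measurable_mixedDiscriminator hpm hqm s
    fun_prop
  refine ⟨hint, ?_⟩
  have hmono := integral_mono_ae hlow_int hint hlow
  rwa [integral_add hopt (hpq.mul_const _), integral_mul_const, integral_add hp hq]
    at hmono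

lemma integral_mul_log_div_half {f g : X → ℝ} (hf : Integrable f μ) (hg : ∀ᵐ x ∂μ, g x ≠ 0)
    (hI : Integrable (fun x => f x * log (f x / (g x / 2))) μ) :
    Integrable (fun x => f x * log (f x / g x)) μ ∧
      ∫ x, f x * log (f x / (g x / 2)) ∂μ =
        ∫ x, f x * log (f x / g x) ∂μ + (∫ x, f x ∂μ) * log 2 := by
  have hae : (fun x => f x * log (f x / (g x / 2))) =ᵐ[μ]
      fun x => f x * log (f x / g x) + f x * log 2 := by
    filter_upwards [hg] with x hx using mul_log_div_half _ hx
  have hint : Integrable (fun x => f x * log (f x / g x)) μ :=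
    ((hI.congr hae).sub (hf.mul_const _)).congr (ae_of_all _ fun x => add_sub_cancel_right _ _)
  refine ⟨hint, ?_⟩
  rw [integral_congr_ae hae, integral_add hint (hf.mul_const _), integral_mul_const]

end

/-- The classical GAN value-function identity: the supremum of
`V(D) = ∫ p·log D + q·log(1−D)` over measurable `D : X → (0,1)` equals
`2·JS(p‖q) − 2·log 2 = KL(p‖(p+q)/2) + KL(q‖(p+q)/2) − 2·log 2`. -/
theorem gan_value_function
    {X : Type*} [MeasurableSpace X] (μ : Measure X)
    (p q : X → ℝ) (hpm : Measurable p) (hqm : Measurable q)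
    (hp0 : ∀ x, 0 ≤ p x) (hq0 : ∀ᵐ x ∂μ, 0 < q x)
    (hp1 : ∫ x, p x ∂μ = 1) (hq1 : ∫ x, q x ∂μ = 1)
    (hIp : Integrable (fun x => p x * Real.log (p x / ((p x + q x) / 2))) μ)
    (hIq : Integrable (fun x => q x * Real.log (q x / ((p x + q x) / 2))) μ) :
    IsLUB {v : ℝ | ∃ D : X → ℝ, Measurable D ∧ (∀ x, D x ∈ Set.Ioo (0 : ℝ) 1) ∧
        Integrable (fun x => p x * Real.log (D x) + q x * Real.log (1 - D x)) μ ∧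
        v = ∫ x, (p x * Real.log (D x) + q x * Real.log (1 - D x)) ∂μ}
      ((∫ x, p x * Real.log (p x / ((p x + q x) / 2)) ∂μ) +
       (∫ x, q x * Real.log (q x / ((p x + q x) / 2)) ∂μ) - 2 * Real.log 2) := by
  have hp : Integrable p μ := .of_integral_ne_zero (by simp [hp1])
  have hq : Integrable q μ := .of_integral_ne_zero (by simp [hq1])
  have hpq : ∀ᵐ x ∂μ, p x + q x ≠ 0 := by
    filter_upwards [hq0] with x hx
    linarith [hp0 x]
  obtain ⟨hIp', hp_eq⟩ := integral_mul_log_div_half hp hpq hIp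
  obtain ⟨hIq', hq_eq⟩ := integral_mul_log_div_half hq hpq hIq
  have hopt : Integrable (ganOptimalIntegrand p q) μ := hIp'.add hIq'
  have hvalue : (∫ x, p x * log (p x / ((p x + q x) / 2)) ∂μ) +
      (∫ x, q x * log (q x / ((p x + q x) / 2)) ∂μ) - 2 * log 2 =
        ∫ x, ganOptimalIntegrand p q x ∂μ := by
    unfold ganOptimalIntegrand
    rw [hp_eq, hq_eq, hp1, hq1, integral_add hIp' hIq']
    ring
  rw [hvalue]
  constructor
  · rintro v ⟨D, -, hD, hDint, rfl⟩
    exact integral_mono_ae hDint hopt (ganIntegrand_ae_le hp0 hq0 hD)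
  · intro b hb
    refine le_of_forall_sub_le fun δ hδ => ?_
    set s := exp (-(δ / 2))
    have hs : s ∈ Set.Ioo (0 : ℝ) 1 := ⟨exp_pos _, exp_lt_one_iff.2 (by linarith)⟩
    obtain ⟨hint, hle⟩ :=
      integrable_ganIntegrand_mixedDiscriminator_and_le hpm hqm hp0 hq0 hp hq hopt hs
    have hmem : ∫ x, ganIntegrand p q (mixedDiscriminator p q s) x ∂μ ≤ b :=
      hb ⟨_, measurable_mixedDiscriminator hpm hqm s, mixedDiscriminator_mem_Ioo q hp0 hs,
        hint, rfl⟩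
    rw [hp1, hq1, log_exp] at hle
    linarith
end

section
/- Let 𝒟 be a set, L, U : 𝒟 → ℝ, and suppose the conclusion of Lemma 1 holds: for every D ∈ 𝒟 there exists D* ∈ 𝒟 with L(D*) = L(D) and U(D*) ≥ U(D) with U(D*) = max U. Then argmax(L + U) ⊆ argmax(L) ∩ argmax(U), assuming argmax(L+U), argmax(L), argmax(U) are nonempty. -/
/-- Abstract form of Proposition 1 (2) and its corollary: under the conclusion
of Lemma 1, every maximizer of `J = L + U` simultaneously maximizes `L`
and `U`. -/
theorem argmax_sum_subset_inter
    {𝒟 : Type*} (L U : 𝒟 → ℝ)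
    (hinter : ∀ D : 𝒟, ∃ Dstar : 𝒟,
      L Dstar = L D ∧ U D ≤ U Dstar ∧ ∀ D' : 𝒟, U D' ≤ U Dstar)
    (hJne : {D : 𝒟 | ∀ D' : 𝒟, L D' + U D' ≤ L D + U D}.Nonempty)
    (hLne : {D : 𝒟 | ∀ D' : 𝒟, L D' ≤ L D}.Nonempty)
    (hUne : {D : 𝒟 | ∀ D' : 𝒟, U D' ≤ U D}.Nonempty) :
    {D : 𝒟 | ∀ D' : 𝒟, L D' + U D' ≤ L D + U D} ⊆
      {D : 𝒟 | ∀ D' : 𝒟, L D' ≤ L D} ∩ {D : 𝒟 | ∀ D' : 𝒟, U D' ≤ U D} := by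
  intro D hD
  obtain ⟨Ds, hLs, hUs, hUmax⟩ := hinter D
  have hUD : ∀ D' : 𝒟, U D' ≤ U D := by
    intro D'
    have h1 := hD Ds
    rw [hLs] at h1
    have : U Ds ≤ U D := by linarith
    exact le_trans (hUmax D') this
  constructor
  · intro D'
    obtain ⟨Ds', hLs', hUs', hUmax'⟩ := hinter D'
    have h1 := hD Ds'
    have h2 := hUD Ds'
    have h3 := hUmax' D
    linarith
  · exact hUD
end
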